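/- The Hamilton–Jacobi equation of the spherical pendulum has no classical solutions: for n ≥ 1 there is no C¹ function u: S^n → ℝ and constant c ∈ ℝ such that ½‖d_xu‖² + x_{n+1} = c for all x ∈ S^n, where ‖d_xu‖ denotes the norm of the differential of u at x as a linear functional on T_xS^n (with the Euclidean inner product). -/

import Mathlib

/-!
At a minimum or maximum of `u` on the sphere the tangential gradient vanishes (Lagrange
multipliers), so the equation forces `x_{n+1} = c` there. At the north pole it gives `c ≥ 1`, so
both extrema lie at the north pole, the only point with `x_{n+1} = 1`. Hence `u` is constant on
the sphere, every point is critical, and the south pole yields `c = -1`.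
-/

open Set

noncomputable section

namespace SphericalPendulum

variable (n : ℕ)

/-- The ambient Euclidean space `ℝ^{n+1}`. -/
abbrev Amb := EuclideanSpace ℝ (Fin (n + 1))

/-- The unit sphere `S^n ⊂ ℝ^{n+1}`. -/
abbrev Sph := Metric.sphere (0 : Amb n) 1

/-- The last coordinate `x_{n+1}` of a point of `ℝ^{n+1}`. -/
def lastCoord (x : Amb n) : ℝ := x (Fin.last n)

/-- The spherical-pendulum Lagrangian `L(x,v) = ½‖v‖² − x_{n+1}`. -/
def Lsph (x v : Amb n) : ℝ := ‖v‖ ^ 2 / 2 - lastCoord n x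

/-- Velocity of a curve in the sphere, computed in the ambient space. -/
def sVel (γ : ℝ → Sph n) (s : ℝ) : Amb n := deriv (fun t : ℝ => (γ t : Amb n)) s

/-- Piecewise `C¹` curve `γ : [a,b] → S^n`. -/
def sPiecewiseC1On (γ : ℝ → Sph n) (a b : ℝ) : Prop :=
  ContinuousOn (fun t : ℝ => (γ t : Amb n)) (Icc a b) ∧
    ∃ (k : ℕ) (t : Fin (k + 1) → ℝ), StrictMono t ∧ t 0 = a ∧ t (Fin.last k) = b ∧
      ∀ i : Fin k, ContDiffOn ℝ 1 (fun s : ℝ => (γ s : Amb n))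
        (Icc (t i.castSucc) (t i.succ))

/-- The action `A_L(γ) = ∫_a^b L(γ(s), γ̇(s)) ds` of a curve `γ : [a,b] → S^n`. -/
def sAction (γ : ℝ → Sph n) (a b : ℝ) : ℝ :=
  ∫ s in a..b, Lsph n (γ s : Amb n) (sVel n γ s)

/-- `u ≺ L + c` : `u` is dominated by `L + c`. -/
def sDominated (c : ℝ) (u : Sph n → ℝ) : Prop :=
  ∀ (γ : ℝ → Sph n) (a b : ℝ), a ≤ b → sPiecewiseC1On n γ a b →
    u (γ b) - u (γ a) ≤ sAction n γ a b + c * (b - a)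

/-- The weak KAM solution `u₊(x) = ∫_{x_{n+1}}^1 √((2−2s)/(1−s²)) ds`. -/
def uPlus (x : Sph n) : ℝ :=
  ∫ s in (lastCoord n (x : Amb n))..1, Real.sqrt ((2 - 2 * s) / (1 - s ^ 2))

/-- Backward weak KAM solution for the value `c`, for the spherical pendulum. -/
def sBackwardWeakKAM (c : ℝ) (u : Sph n → ℝ) : Prop :=
  sDominated n c u ∧
    ∀ x : Sph n, ∃ γ : ℝ → Sph n, γ 0 = x ∧
      ContDiffOn ℝ 1 (fun s : ℝ => (γ s : Amb n)) (Iic 0) ∧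
      ∀ t : ℝ, 0 ≤ t → u x - u (γ (-t)) = sAction n γ (-t) 0 + c * t

/-- The north pole `N = (0,…,0,1) ∈ S^n`. -/
def northPole : Sph n :=
  ⟨EuclideanSpace.single (Fin.last n) (1 : ℝ), by simp⟩

section Sphere

variable {E : Type*} [NormedAddCommGroup E] [InnerProductSpace ℝ E] [CompleteSpace E]

theorem _root_.IsLocalExtrOn.exists_gradient_eq_smul_of_mem_sphere {u : E → ℝ} {x : E} {r : ℝ}
    (hr : r ≠ 0) (hx : x ∈ Metric.sphere (0 : E) r)
    (hext : IsLocalExtrOn u (Metric.sphere 0 r) x) (hu : ContDiffAt ℝ 1 u x) :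
    ∃ μ : ℝ, gradient u x = μ • x := by
  have hxr : ‖x‖ = r := mem_sphere_zero_iff_norm.mp hx
  have hlevel : {y : E | ‖y‖ ^ 2 = ‖x‖ ^ 2} = Metric.sphere 0 r := by
    ext y
    simp [hxr, sq_eq_sq₀ (norm_nonneg _) (hxr ▸ norm_nonneg x)]
  obtain ⟨a, b, hab, hmul⟩ := (hlevel ▸ hext).exists_multipliers_of_hasStrictFDerivAt_1d
    (hasStrictFDerivAt_norm_sq x) (hu.hasStrictFDerivAt one_ne_zero)
  have happly (v : E) : a * (2 * inner ℝ x v) + b * fderiv ℝ u x v = 0 := by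
    simpa using congrArg (fun L : StrongDual ℝ E => L v) hmul
  have hb : b ≠ 0 := by
    rintro rfl
    have : a * (2 * ‖x‖ ^ 2) = 0 := by simpa [real_inner_self_eq_norm_sq] using happly x
    exact hab (by simp_all)
  refine ⟨-(2 * a / b), ext_inner_right ℝ fun v => ?_⟩
  rw [← InnerProductSpace.toDual_apply_apply, toDual_gradient, real_inner_smul_left]
  field_simp
  linarith [happly v]

theorem _root_.IsLocalExtrOn.gradient_sub_inner_smul_eq_zero {u : E → ℝ} {x : E}
    (hx : x ∈ Metric.sphere (0 : E) 1) (hext : IsLocalExtrOn u (Metric.sphere 0 1) x)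
    (hu : ContDiffAt ℝ 1 u x) : gradient u x - inner ℝ x (gradient u x) • x = 0 := by
  obtain ⟨μ, hμ⟩ := hext.exists_gradient_eq_smul_of_mem_sphere one_ne_zero hx hu
  rw [hμ, real_inner_smul_right, real_inner_self_eq_norm_sq, mem_sphere_zero_iff_norm.mp hx]
  simp

end Sphere

theorem _root_.IsMinOn.isMinOn_of_isMaxOn {α β : Type*} [Preorder β] {f : α → β} {s : Set α}
    {a b : α} (hmin : IsMinOn f s a) (hmax : IsMaxOn f s a) (hb : b ∈ s) : IsMinOn f s b :=
  fun _ hz => (hmax hb).trans (hmin hz)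

theorem lastCoord_eq_inner_northPole (x : Amb n) :
    lastCoord n x = inner ℝ (northPole n : Amb n) x := by
  simp [lastCoord, northPole, EuclideanSpace.inner_single_left]

theorem lastCoord_northPole : lastCoord n (northPole n) = 1 := by
  simp [lastCoord, northPole]

theorem lastCoord_neg (x : Amb n) : lastCoord n (-x) = -lastCoord n x := rfl

theorem lastCoord_le_one {x : Amb n} (hx : x ∈ Sph n) : lastCoord n x ≤ 1 := by
  simpa [lastCoord_eq_inner_northPole, mem_sphere_zero_iff_norm.mp hx] using
    real_inner_le_norm (northPole n : Amb n) x

theorem eq_northPole_of_lastCoord_eq_one {x : Amb n} (hx : x ∈ Sph n)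
    (h : lastCoord n x = 1) : x = northPole n :=
  ((inner_eq_one_iff_of_norm_eq_one (mem_sphere_zero_iff_norm.mp hx)
    (mem_sphere_zero_iff_norm.mp (northPole n).2)).mp
    (by rwa [real_inner_comm, ← lastCoord_eq_inner_northPole]))

/-- `‖d_xu‖` is the norm of the tangential part of the ambient gradient of a `C¹` extension of `u`
to an open neighbourhood of the sphere. -/
theorem no_classical_solution_of_hamilton_jacobi :
    ¬ ∃ (U : Set (Amb n)) (u : Amb n → ℝ) (c : ℝ),
        IsOpen U ∧ (Sph n : Set (Amb n)) ⊆ U ∧ ContDiffOn ℝ 1 u U ∧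
        ∀ x : Amb n, x ∈ Sph n →
          ‖gradient u x - (inner ℝ x (gradient u x) : ℝ) • x‖ ^ 2 / 2 + lastCoord n x = c := by
  rintro ⟨U, u, c, hU, hsub, hu, hHJ⟩
  have hcrit : ∀ x ∈ Sph n, IsExtrOn u (Sph n) x → lastCoord n x = c := fun x hx hext => by
    have hHJx := hHJ x hx
    rwa [hext.localize.gradient_sub_inner_smul_eq_zero hx (hu.contDiffAt (hU.mem_nhds (hsub hx))),
      norm_zero, zero_pow two_ne_zero, zero_div, zero_add] at hHJx
  have hc : 1 ≤ c := by
    rw [← hHJ _ (northPole n).2, lastCoord_northPole]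
    exact le_add_of_nonneg_left (by positivity)
  have hpole : ∀ x ∈ Sph n, IsExtrOn u (Sph n) x → x = northPole n := fun x hx hext =>
    eq_northPole_of_lastCoord_eq_one n hx ((lastCoord_le_one n hx).antisymm (hcrit x hx hext ▸ hc))
  have hK : IsCompact (Sph n : Set (Amb n)) := isCompact_sphere 0 1
  have hne : (Sph n : Set (Amb n)).Nonempty := NormedSpace.sphere_nonempty.mpr zero_le_one
  obtain ⟨xm, hxm, hmin⟩ := hK.exists_isMinOn hne (hu.continuousOn.mono hsub)
  obtain ⟨xM, hxM, hmax⟩ := hK.exists_isMaxOn hne (hu.continuousOn.mono hsub)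
  have hmax_at_xm : IsMaxOn u (Sph n) xm := by
    rwa [hpole xm hxm hmin.isExtr, ← hpole xM hxM hmax.isExtr]
  have hsouth : -(northPole n : Amb n) ∈ Sph n := by simp
  have hS := hcrit _ hsouth (hmin.isMinOn_of_isMaxOn hmax_at_xm hsouth).isExtr
  rw [lastCoord_neg, lastCoord_northPole] at hS
  linarith

end SphericalPendulum
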